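/- arXiv:1606.05880 — 4 statements merged into one kernel-verified Lean document; each statement's English description precedes it below -/
import Mathlib

section
/- Let P₁, …, P_N be N points on the unit sphere S² ⊂ ℝ³, and for each j let d_j be the minimum Euclidean distance from P_j to the other points. Then ∑_{j=1}^N d_j² ≤ 16. In particular the average of the d_j is at most 4/√N. -/
/-!
Put around each `P_j` the spherical sector of the unit ball over the cap of unit vectors within
Euclidean distance `d_j / 2` of `P_j`. Since `d_i / 2 + d_j / 2 ≤ |P_i - P_j|`, the triangle
inequality makes these sectors pairwise disjoint. By Archimedes the cap has area `π (d_j / 2)²`,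
so the sector has volume `π d_j² / 12`, and comparing with the volume `4π / 3` of the ball gives
`∑ d_j² ≤ 16`. The sector volume is computed by slicing along the axis through `P_j`: a cone of
height `c = 1 - d_j² / 8` followed by a cap of the ball.
-/

open MeasureTheory Real Set

/-- For `c = 1 - r ^ 2 / 2` this is the cone, cut off at the unit sphere, over the unit vectors
at distance less than `r` from the unit vector `P`. -/
def sphericalSector {E : Type*} [NormedAddCommGroup E] [InnerProductSpace ℝ E] (P : E) (c : ℝ) :
    Set E :=
  {x | ‖x‖ < 1 ∧ c * ‖x‖ < inner ℝ x P}

section InnerProductSpace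

variable {E : Type*} [NormedAddCommGroup E] [InnerProductSpace ℝ E]

lemma sphericalSector_subset_ball (P : E) (c : ℝ) : sphericalSector P c ⊆ Metric.ball 0 1 :=
  fun _ hx => mem_ball_zero_iff.mpr hx.1

lemma isOpen_sphericalSector (P : E) (c : ℝ) : IsOpen (sphericalSector P c) :=
  (isOpen_lt continuous_norm continuous_const).inter
    (isOpen_lt (continuous_const.mul continuous_norm) (continuous_id.inner continuous_const))

lemma preimage_sphericalSector {F : Type*} [NormedAddCommGroup F] [InnerProductSpace ℝ F]
    (L : E ≃ₗᵢ[ℝ] F) (P : E) (c : ℝ) : L ⁻¹' sphericalSector (L P) c = sphericalSector P c := by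
  ext x
  simp [sphericalSector]

lemma mem_sphericalSector_of_sq_lt {P y : E} {c : ℝ} (hyP : 0 < inner ℝ y P) (hy : ‖y‖ ^ 2 < 1)
    (hcy : c ^ 2 * ‖y‖ ^ 2 < inner ℝ y P ^ 2) : y ∈ sphericalSector P c :=
  ⟨(sq_lt_one_iff₀ (norm_nonneg y)).mp hy, lt_of_pow_lt_pow_left₀ 2 hyP.le (by rwa [mul_pow])⟩

lemma dist_normalize_lt_of_mem_sphericalSector {P x : E} {r : ℝ} (hP : ‖P‖ = 1) (hr : 0 ≤ r)
    (hx : x ∈ sphericalSector P (1 - r ^ 2 / 2)) : dist (‖x‖⁻¹ • x) P < r := by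
  obtain ⟨-, hxP⟩ := hx
  have hx0 : x ≠ 0 := by
    rintro rfl
    simp at hxP
  have hinner : 1 - r ^ 2 / 2 < inner ℝ (‖x‖⁻¹ • x) P := by
    rwa [real_inner_smul_left, ← div_eq_inv_mul, lt_div_iff₀ (norm_pos_iff.mpr hx0)]
  have hunit : ‖‖x‖⁻¹ • x‖ = 1 := norm_smul_inv_norm hx0
  have hsq : dist (‖x‖⁻¹ • x) P ^ 2 < r ^ 2 := by
    rw [dist_eq_norm, norm_sub_sq_real, hunit, hP]
    linarith
  exact lt_of_pow_lt_pow_left₀ 2 hr hsq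

lemma disjoint_sphericalSector {P Q : E} {r s : ℝ} (hP : ‖P‖ = 1) (hQ : ‖Q‖ = 1) (hr : 0 ≤ r)
    (hs : 0 ≤ s) (hPQ : r + s ≤ dist P Q) :
    Disjoint (sphericalSector P (1 - r ^ 2 / 2)) (sphericalSector Q (1 - s ^ 2 / 2)) := by
  refine Set.disjoint_left.mpr fun x hxP hxQ => ?_
  have hP' := dist_normalize_lt_of_mem_sphericalSector hP hr hxP
  have hQ' := dist_normalize_lt_of_mem_sphericalSector hQ hs hxQ
  linarith [dist_triangle_left P Q (‖x‖⁻¹ • x)]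

end InnerProductSpace

lemma volume_sphericalSector_eq_single {n : ℕ} {P : EuclideanSpace ℝ (Fin (n + 1))}
    (hP : ‖P‖ = 1) (c : ℝ) :
    volume (sphericalSector P c) =
      volume (sphericalSector (EuclideanSpace.single 0 1 : EuclideanSpace ℝ (Fin (n + 1))) c) := by
  have horth : Orthonormal ℝ (({0} : Set (Fin (n + 1))).domRestrict fun _ => P) :=
    ⟨fun _ => hP, fun i j hij => absurd (Subtype.ext (i.2.trans j.2.symm)) hij⟩
  obtain ⟨b, hb⟩ := horth.exists_orthonormalBasis_extension_of_card_eq (by simp)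
  rw [← preimage_sphericalSector b.repr, ← hb 0 rfl, b.repr_self,
    b.measurePreserving_repr.measure_preimage
      (isOpen_sphericalSector _ _).measurableSet.nullMeasurableSet]

lemma norm_toLp_cons_sq {n : ℕ} (t : ℝ) (p : EuclideanSpace ℝ (Fin n)) :
    ‖(WithLp.toLp 2 (Fin.cons t p.ofLp) : EuclideanSpace ℝ (Fin (n + 1)))‖ ^ 2 =
      t ^ 2 + ‖p‖ ^ 2 := by
  simp [EuclideanSpace.norm_sq_eq, Fin.sum_univ_succ]

lemma toLp_cons_mem_sphericalSector_single {n : ℕ} {c t : ℝ} {p : EuclideanSpace ℝ (Fin n)}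
    (ht : 0 < t) (hcone : c ^ 2 * (t ^ 2 + ‖p‖ ^ 2) < t ^ 2) (hball : t ^ 2 + ‖p‖ ^ 2 < 1) :
    (WithLp.toLp 2 (Fin.cons t p.ofLp) : EuclideanSpace ℝ (Fin (n + 1))) ∈
      sphericalSector (EuclideanSpace.single 0 1) c := by
  refine mem_sphericalSector_of_sq_lt ?_ ?_ ?_ <;>
    simpa [EuclideanSpace.inner_single_right, norm_toLp_cons_sq] using ‹_›

lemma volume_eq_lintegral_volume_slice {n : ℕ} {T : Set (EuclideanSpace ℝ (Fin (n + 1)))}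
    (hT : MeasurableSet T) :
    volume T =
      ∫⁻ t, volume {p : EuclideanSpace ℝ (Fin n) | WithLp.toLp 2 (Fin.cons t p.ofLp) ∈ T} := by
  let e := (MeasurableEquiv.toLp 2 (Fin (n + 1) → ℝ)).symm.trans
    ((MeasurableEquiv.piFinSuccAbove (fun _ => ℝ) 0).trans
      (MeasurableEquiv.prodCongr (MeasurableEquiv.refl ℝ) (MeasurableEquiv.toLp 2 (Fin n → ℝ))))
  have he : MeasurePreserving e volume (volume.prod volume) :=
    (EuclideanSpace.volume_preserving_symm_measurableEquiv_toLp _).trans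
      ((measurePreserving_piFinSuccAbove (fun _ => volume) 0).trans
        ((MeasurePreserving.id volume).prod (PiLp.volume_preserving_toLp (Fin n))))
  rw [← he.symm.measure_preimage hT.nullMeasurableSet, Measure.prod_apply (e.symm.measurable hT)]
  congr 1
  ext t
  congr 1
  ext p
  simp [e, MeasurableEquiv.prodCongr, Fin.consEquiv]

lemma volume_setOf_norm_sq_lt (s : ℝ) :
    volume {p : EuclideanSpace ℝ (Fin 2) | ‖p‖ ^ 2 < s} = ENNReal.ofReal (π * s) := by
  rcases le_or_gt s 0 with hs | hs
  · have : {p : EuclideanSpace ℝ (Fin 2) | ‖p‖ ^ 2 < s} = ∅ :=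
      eq_empty_of_forall_notMem fun p hp => (lt_of_lt_of_le hp hs).not_ge (sq_nonneg _)
    rw [this, measure_empty, ENNReal.ofReal_of_nonpos (mul_nonpos_of_nonneg_of_nonpos pi_nonneg hs)]
  · have : {p : EuclideanSpace ℝ (Fin 2) | ‖p‖ ^ 2 < s} = Metric.ball 0 √s := by
      ext p
      rw [mem_ofPred_eq, mem_ball_zero_iff, ← sqrt_lt_sqrt_iff (sq_nonneg _),
        sqrt_sq (norm_nonneg _)]
    rw [this, EuclideanSpace.volume_ball_fin_two, ← ENNReal.ofReal_pow (sqrt_nonneg s),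
      sq_sqrt hs.le, ← ENNReal.ofReal_mul hs.le, mul_comm]

lemma setLIntegral_Ioc_ofReal {f : ℝ → ℝ} {a b : ℝ} (hab : a ≤ b) (hf : Continuous f)
    (hf0 : ∀ t ∈ Ioc a b, 0 ≤ f t) :
    ∫⁻ t in Ioc a b, ENNReal.ofReal (f t) = ENNReal.ofReal (∫ t in a..b, f t) := by
  rw [intervalIntegral.integral_of_le hab, ofReal_integral_eq_lintegral_ofReal hf.integrableOn_Ioc
    (ae_restrict_of_forall_mem measurableSet_Ioc hf0)]

lemma setLIntegral_cone_slices {c : ℝ} (hc0 : 0 < c) (hc1 : c ≤ 1) :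
    ∫⁻ t in Ioc 0 c, ENNReal.ofReal (π * ((1 - c ^ 2) / c ^ 2 * t ^ 2)) =
      ENNReal.ofReal (π * (1 - c ^ 2) * c / 3) := by
  rw [setLIntegral_Ioc_ofReal (f := fun t => π * ((1 - c ^ 2) / c ^ 2 * t ^ 2)) hc0.le
    (by fun_prop) fun t _ => ?_]
  · rw [intervalIntegral.integral_const_mul, intervalIntegral.integral_const_mul, integral_pow]
    congr 1
    field_simp
    ring
  · have : 0 ≤ 1 - c ^ 2 := by nlinarith
    positivity

lemma setLIntegral_cap_slices {c : ℝ} (hc0 : 0 < c) (hc1 : c ≤ 1) :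
    ∫⁻ t in Ioc c 1, ENNReal.ofReal (π * (1 - t ^ 2)) =
      ENNReal.ofReal (π * (2 / 3 - c + c ^ 3 / 3)) := by
  rw [setLIntegral_Ioc_ofReal (f := fun t => π * (1 - t ^ 2)) hc1 (by fun_prop)
    fun t ht => mul_nonneg pi_pos.le (by nlinarith [ht.1, ht.2])]
  rw [intervalIntegral.integral_const_mul, intervalIntegral.integral_sub intervalIntegrable_const
    ((continuous_pow 2).intervalIntegrable c 1), integral_pow]
  congr 1
  simp
  ring

lemma volume_sphericalSector_single_ge {c : ℝ} (hc0 : 0 < c) (hc1 : c ≤ 1) :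
    ENNReal.ofReal (2 * π / 3 * (1 - c)) ≤
      volume (sphericalSector (EuclideanSpace.single 0 1 : EuclideanSpace ℝ (Fin 3)) c) := by
  rw [volume_eq_lintegral_volume_slice (isOpen_sphericalSector _ _).measurableSet]
  set S := fun t => {p : EuclideanSpace ℝ (Fin 2) |
    WithLp.toLp 2 (Fin.cons t p.ofLp) ∈ sphericalSector (EuclideanSpace.single 0 1) c}
  -- Below height `c` the slice is bounded by the cone, above it by the unit sphere.
  have hcone : ∀ t ∈ Ioc 0 c,
      ENNReal.ofReal (π * ((1 - c ^ 2) / c ^ 2 * t ^ 2)) ≤ volume (S t) := fun t ⟨ht0, htc⟩ => by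
    refine (volume_setOf_norm_sq_lt _).symm.trans_le (measure_mono fun p hp => ?_)
    have hp : ‖p‖ ^ 2 * c ^ 2 < (1 - c ^ 2) * t ^ 2 := by
      rwa [mem_ofPred_eq, div_mul_eq_mul_div, lt_div_iff₀ (by positivity)] at hp
    exact toLp_cons_mem_sphericalSector_single ht0 (by nlinarith) (by nlinarith)
  have hcap : ∀ t ∈ Ioc c 1, ENNReal.ofReal (π * (1 - t ^ 2)) ≤ volume (S t) := fun t ⟨hct, _⟩ => by
    refine (volume_setOf_norm_sq_lt _).symm.trans_le (measure_mono fun p hp => ?_)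
    have hp : ‖p‖ ^ 2 < 1 - t ^ 2 := hp
    exact toLp_cons_mem_sphericalSector_single (hc0.trans hct) (by nlinarith) (by linarith)
  calc ENNReal.ofReal (2 * π / 3 * (1 - c))
      = ENNReal.ofReal (π * (1 - c ^ 2) * c / 3) +
          ENNReal.ofReal (π * (2 / 3 - c + c ^ 3 / 3)) := by
        have : 0 ≤ 1 - c ^ 2 := by nlinarith
        rw [← ENNReal.ofReal_add (by positivity)
          (by nlinarith [mul_nonneg (mul_nonneg pi_pos.le (sq_nonneg (1 - c))) hc0.le])]
        ring_nf
    _ ≤ (∫⁻ t in Ioc 0 c, volume (S t)) + ∫⁻ t in Ioc c 1, volume (S t) := by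
        rw [← setLIntegral_cone_slices hc0 hc1, ← setLIntegral_cap_slices hc0 hc1]
        exact add_le_add (lintegral_mono_ae (ae_restrict_of_forall_mem measurableSet_Ioc hcone))
          (lintegral_mono_ae (ae_restrict_of_forall_mem measurableSet_Ioc hcap))
    _ = ∫⁻ t in Ioc 0 1, volume (S t) := by
        rw [← Ioc_union_Ioc_eq_Ioc hc0.le hc1,
          lintegral_union measurableSet_Ioc (Ioc_disjoint_Ioc_of_le le_rfl)]
    _ ≤ ∫⁻ t, volume (S t) := setLIntegral_le_lintegral _ _

lemma volume_sphericalSector_ge {P : EuclideanSpace ℝ (Fin 3)} (hP : ‖P‖ = 1) {c : ℝ}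
    (hc0 : 0 < c) (hc1 : c ≤ 1) :
    ENNReal.ofReal (2 * π / 3 * (1 - c)) ≤ volume (sphericalSector P c) :=
  volume_sphericalSector_eq_single hP c ▸ volume_sphericalSector_single_ge hc0 hc1

/-- If `P₁, …, P_N` are points on the unit sphere in `ℝ³` and `d_j` is at most the distance
from `P_j` to every other point, then `∑ d_j² ≤ 16`. -/
theorem sum_nearest_neighbour_sq (N : ℕ) (hN : 2 ≤ N)
    (P : Fin N → EuclideanSpace ℝ (Fin 3)) (hP : ∀ j, ‖P j‖ = 1)
    (d : Fin N → ℝ) (hd0 : ∀ j, 0 ≤ d j)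
    (hd : ∀ i j, i ≠ j → d j ≤ dist (P i) (P j)) :
    ∑ j, (d j) ^ 2 ≤ 16 := by
  have : Nontrivial (Fin N) := Fin.nontrivial_iff_two_le.mpr hN
  have hd2 : ∀ j, d j ≤ 2 := fun j => by
    obtain ⟨i, hij⟩ := exists_ne j
    linarith [hd i j hij, dist_le_norm_add_norm (P i) (P j), hP i, hP j]
  set K := fun j => sphericalSector (P j) (1 - (d j / 2) ^ 2 / 2)
  have hK : ∀ j, ENNReal.ofReal (π / 12 * d j ^ 2) ≤ volume (K j) := fun j => by
    convert volume_sphericalSector_ge (c := 1 - (d j / 2) ^ 2 / 2) (hP j)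
      (by nlinarith [hd0 j, hd2 j]) (by nlinarith) using 2
    ring
  have hdisj : Pairwise (Function.onFun Disjoint K) := fun i j hij =>
    disjoint_sphericalSector (hP i) (hP j) (by linarith [hd0 i]) (by linarith [hd0 j])
      (by linarith [hd i j hij, hd j i hij.symm, dist_comm (P i) (P j)])
  have hpacking : ∑ j, volume (K j) ≤ volume (Metric.ball (0 : EuclideanSpace ℝ (Fin 3)) 1) := by
    rw [← (measure_iUnion hdisj fun j => (isOpen_sphericalSector _ _).measurableSet).trans
      (tsum_fintype _)]
    exact measure_mono (iUnion_subset fun j => sphericalSector_subset_ball _ _)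
  have hsum : ENNReal.ofReal (∑ j, π / 12 * d j ^ 2) ≤ ENNReal.ofReal (π * 4 / 3) := by
    rw [ENNReal.ofReal_sum_of_nonneg fun j _ => by positivity]
    calc ∑ j, ENNReal.ofReal (π / 12 * d j ^ 2)
        ≤ ∑ j, volume (K j) := Finset.sum_le_sum fun j _ => hK j
      _ ≤ ENNReal.ofReal (π * 4 / 3) := by simpa using hpacking
  rw [ENNReal.ofReal_le_ofReal_iff (by positivity), ← Finset.mul_sum] at hsum
  nlinarith [pi_pos]
end

section
/- Let m, x₃ be integers with 0 < x₃ < m, suppose m - x₃ < every prime factor of m that is ≡ 3 (mod 4), and suppose (m - x₃)(m + x₃) = x₁² + x₂² is a sum of two squares. Then m + x₃ is a sum of two squares. -/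
/-!
A prime `q ≡ 3 (mod 4)` occurs to an even power in the sum of two squares `(m - x₃)(m + x₃)`.
If it occurred to an odd power in `m + x₃`, it would divide `m - x₃` as well, hence `2m`, hence `m`;
but then `q ≤ m - x₃ < q`. So every such prime occurs to an even power in `m + x₃`.
-/

theorem Nat.eq_sq_add_sq_of_mul_eq_sq_add_sq {a b : ℕ}
    (hab : ∀ q : ℕ, q.Prime → q % 4 = 3 → q ∣ a → ¬ q ∣ b)
    (h : ∃ x y, a * b = x ^ 2 + y ^ 2) : ∃ x y, b = x ^ 2 + y ^ 2 := by
  rw [Nat.eq_sq_add_sq_iff] at h ⊢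
  intro q hqb hq3
  obtain ⟨hq, hqb, hb⟩ := Nat.mem_primeFactors.mp hqb
  have : Fact q.Prime := ⟨hq⟩
  by_cases hqa : q ∣ a
  · exact absurd hqb (hab q hq hq3 hqa)
  have ha : a ≠ 0 := by rintro rfl; exact hqa (dvd_zero q)
  have hv : padicValNat q (a * b) = padicValNat q b := by
    rw [padicValNat.mul ha hb, padicValNat.eq_zero_of_not_dvd hqa, zero_add]
  exact hv ▸ h q (Nat.mem_primeFactors.mpr ⟨hq, dvd_mul_of_dvd_right hqb a, mul_ne_zero ha hb⟩) hq3

theorem Int.eq_sq_add_sq_of_mul_eq_sq_add_sq {a b : ℤ} (hb : 0 ≤ b)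
    (hab : ∀ q : ℕ, q.Prime → q % 4 = 3 → (q : ℤ) ∣ a → ¬ (q : ℤ) ∣ b)
    (h : ∃ x y : ℤ, a * b = x ^ 2 + y ^ 2) : ∃ x y : ℤ, b = x ^ 2 + y ^ 2 := by
  obtain ⟨x, y, hxy⟩ := h
  have habs : a.natAbs * b.natAbs = x.natAbs ^ 2 + y.natAbs ^ 2 := by
    zify
    rw [← abs_mul, hxy, sq_abs, sq_abs, abs_of_nonneg (by positivity)]
  obtain ⟨u, v, huv⟩ := Nat.eq_sq_add_sq_of_mul_eq_sq_add_sq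
    (fun q hq hq3 hqa hqb => hab q hq hq3 (Int.natCast_dvd.mpr hqa) (Int.natCast_dvd.mpr hqb))
    ⟨_, _, habs⟩
  exact ⟨u, v, by rw [← Int.natAbs_of_nonneg hb, huv]; push_cast; rfl⟩

theorem Int.natCast_dvd_of_dvd_sub_of_dvd_add {p : ℕ} {m x : ℤ} (hp : p.Prime) (hp2 : p ≠ 2)
    (hsub : (p : ℤ) ∣ m - x) (hadd : (p : ℤ) ∣ m + x) : (p : ℤ) ∣ m := by
  have h2m : (p : ℤ) ∣ 2 * m := by
    simpa only [sub_add_add_cancel, ← two_mul] using dvd_add hsub hadd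
  refine (Int.Prime.dvd_mul' hp h2m).resolve_left fun h2 => hp2 ?_
  exact (Nat.prime_dvd_prime_iff_eq hp Nat.prime_two).mp (by exact_mod_cast h2)

/-- If `0 < x₃ < m`, every prime factor `p ≡ 3 (mod 4)` of `m` exceeds `m - x₃`, and
`(m - x₃)(m + x₃)` is a sum of two squares, then `m + x₃` is a sum of two squares. -/
theorem shifted_sum_of_two_squares (m x₃ : ℤ) (h0 : 0 < x₃) (hm : x₃ < m)
    (hprimes : ∀ p : ℕ, p.Prime → p % 4 = 3 → (p : ℤ) ∣ m → m - x₃ < p)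
    (hsq : ∃ x₁ x₂ : ℤ, (m - x₃) * (m + x₃) = x₁ ^ 2 + x₂ ^ 2) :
    ∃ a b : ℤ, m + x₃ = a ^ 2 + b ^ 2 := by
  refine Int.eq_sq_add_sq_of_mul_eq_sq_add_sq (by linarith) ?_ hsq
  intro q hq hq3 hsub hadd
  have hqm : (q : ℤ) ∣ m :=
    Int.natCast_dvd_of_dvd_sub_of_dvd_add hq (by omega) hsub hadd
  have hq_le : (q : ℤ) ≤ m - x₃ := Int.le_of_dvd (by linarith) hsub
  linarith [hprimes q hq hq3 hqm]
end

section
/- Let f: ℝ/ℤ → ℝ (or f on [0,1]) be of bounded variation with total variation V(f), and let x₁,…,x_N ∈ [0,1] have discrepancy D_N = sup over intervals I ⊂ [0,1] of |#{n ≤ N : x_n ∈ I}/N − length(I)|. Then |(1/N)∑_{n≤N} f(x_n) − ∫₀¹ f(x)dx| ≤ V(f)·D_N. -/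
/-!
By the Jordan decomposition, `f = p - q` on `[0,1]` with `p, q` monotone and
`(p 1 - p 0) + (q 1 - q 0) = V(f)`, so it suffices to treat a monotone `g`. For such `g` the
layer-cake formula writes both the sample mean and the integral of `g - g 0` as integrals over
`t ∈ (0, g 1 - g 0]` of the empirical and the Lebesgue measure of the superlevel set
`{g - g 0 ≥ t} ∩ [0,1]`. This set is an interval with right endpoint `1`, so its two measures
differ by at most `D`.
-/

open MeasureTheory

theorem sum_eq_integral_card_le {ι : Type*} [Fintype ι] [MeasurableSpace ι]
    [MeasurableSingletonClass ι] {φ : ι → ℝ} {M : ℝ} (h0 : 0 ≤ φ)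
    (hM : φ ≤ fun _ => M) :
    ∑ i, φ i = ∫ t in Set.Ioc 0 M, ((Finset.univ.filter fun i => t ≤ φ i).card : ℝ) := by
  classical
  rw [← integral_count, Integrable.of_finite.integral_eq_integral_Ioc_meas_le
    (.of_forall h0) (.of_forall hM)]
  congr with t
  rw [← Finset.coe_filter_univ, measureReal_def, Measure.count_apply_finset,
    ENNReal.toReal_natCast]

theorem setIntegral_eq_integral_measureReal_le_inter {α : Type*} [MeasurableSpace α]
    {μ : Measure α} {s : Set α} {φ : α → ℝ} {M : ℝ} (hs : MeasurableSet s)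
    (hφ : IntegrableOn φ s μ) (h0 : ∀ a ∈ s, 0 ≤ φ a) (hM : ∀ a ∈ s, φ a ≤ M) :
    ∫ a in s, φ a ∂μ = ∫ t in Set.Ioc 0 M, μ.real ({a | t ≤ φ a} ∩ s) := by
  rw [hφ.integral_eq_integral_Ioc_meas_le (ae_restrict_of_forall_mem hs h0)
    (ae_restrict_of_forall_mem hs hM)]
  simp_rw [measureReal_restrict_apply' hs]

section Discrepancy

variable {N : ℕ}

noncomputable def samplingError (x : Fin N → ℝ) (g : ℝ → ℝ) : ℝ :=
  (1 / N : ℝ) * ∑ n, g (x n) - ∫ t in (0 : ℝ)..1, g t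

def IsDiscrepancyBound (x : Fin N → ℝ) (D : ℝ) : Prop :=
  ∀ a b : ℝ, 0 ≤ a → a ≤ b → b ≤ 1 →
    |((Finset.univ.filter fun n => x n ∈ Set.Icc a b).card : ℝ) / N - (b - a)| ≤ D

theorem samplingError_sub (x : Fin N → ℝ) {p q : ℝ → ℝ}
    (hp : IntervalIntegrable p volume 0 1) (hq : IntervalIntegrable q volume 0 1) :
    samplingError x (p - q) = samplingError x p - samplingError x q := by
  simp only [samplingError, Pi.sub_apply, Finset.sum_sub_distrib,
    intervalIntegral.integral_sub hp hq]
  ring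

namespace IsDiscrepancyBound

variable {x : Fin N → ℝ} {D : ℝ}

theorem nonneg (hD : IsDiscrepancyBound x D) : 0 ≤ D :=
  (abs_nonneg _).trans (hD 0 0 le_rfl le_rfl zero_le_one)

theorem abs_card_Ioc_div_sub_le (hD : IsDiscrepancyBound x D) (hN : 0 < N)
    (hx : ∀ n, x n ∈ Set.Icc (0 : ℝ) 1) {c : ℝ} (hc : c ∈ Set.Icc (0 : ℝ) 1) :
    |((Finset.univ.filter fun n => x n ∈ Set.Ioc c 1).card : ℝ) / N - (1 - c)| ≤ D := by
  have hcompl : (Finset.univ.filter fun n => x n ∉ Set.Ioc c 1)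
      = Finset.univ.filter fun n => x n ∈ Set.Icc 0 c := by
    refine Finset.filter_congr fun n _ => ?_
    obtain ⟨hx0, hx1⟩ := hx n
    simp only [Set.mem_Ioc, Set.mem_Icc, not_and, not_le]
    exact ⟨fun h => ⟨hx0, not_lt.1 fun h' => (h h').not_ge hx1⟩,
      fun h h' => absurd h' h.2.not_gt⟩
  have hcard :=
    Finset.card_filter_add_card_filter_not (s := Finset.univ) fun n => x n ∈ Set.Ioc c 1
  rw [hcompl, Finset.card_univ, Fintype.card_fin, ← Nat.cast_inj (R := ℝ), Nat.cast_add]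
    at hcard
  have hNR : (N : ℝ) ≠ 0 := by positivity
  rw [← abs_neg]
  convert hD 0 c le_rfl hc.1 hc.2 using 2
  field_simp
  linarith

open Classical in
theorem abs_card_div_sub_volume_le (hD : IsDiscrepancyBound x D) (hN : 0 < N)
    (hx : ∀ n, x n ∈ Set.Icc (0 : ℝ) 1) {S : Set ℝ} (hS : S ⊆ Set.Icc 0 1)
    (hup : ∀ a ∈ S, Set.Icc a 1 ⊆ S) :
    |((Finset.univ.filter fun n => x n ∈ S).card : ℝ) / N - volume.real S| ≤ D := by
  rcases S.eq_empty_or_nonempty with rfl | hne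
  · simpa using hD.nonneg
  have hbdd : BddBelow S := ⟨0, fun a ha => (hS ha).1⟩
  set c := sInf S
  have hc : c ∈ Set.Icc (0 : ℝ) 1 := by
    obtain ⟨a, ha⟩ := hne
    exact ⟨le_csInf ⟨a, ha⟩ fun b hb => (hS hb).1, (csInf_le hbdd ha).trans (hS ha).2⟩
  have hIoc : Set.Ioc c 1 ⊆ S := fun b hb => by
    obtain ⟨a, ha, hab⟩ := exists_lt_of_csInf_lt hne hb.1
    exact hup a ha ⟨hab.le, hb.2⟩
  have hIcc : S ⊆ Set.Icc c 1 := fun a ha => ⟨csInf_le hbdd ha, (hS ha).2⟩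
  by_cases hcS : c ∈ S
  · have hSeq : S = Set.Icc c 1 := hIcc.antisymm (hup c hcS)
    rw [hSeq, Real.volume_real_Icc, max_eq_left (by linarith [hc.2])]
    convert hD c 1 hc.1 hc.2 le_rfl
  · have hSeq : S = Set.Ioc c 1 := Set.Subset.antisymm (fun b hb =>
      ⟨(hIcc hb).1.lt_of_ne fun h => hcS (h ▸ hb), (hIcc hb).2⟩) hIoc
    rw [hSeq, Real.volume_real_Ioc, max_eq_left (by linarith [hc.2])]
    convert hD.abs_card_Ioc_div_sub_le hN hx hc

end IsDiscrepancyBound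

def superlevelIcc (g : ℝ → ℝ) (t : ℝ) : Set ℝ :=
  {s | t ≤ g s - g 0} ∩ Set.Icc 0 1

theorem antitone_superlevelIcc (g : ℝ → ℝ) : Antitone (superlevelIcc g) :=
  fun _ _ htt' _ hs => ⟨htt'.trans hs.1, hs.2⟩

namespace MonotoneOn

variable {g : ℝ → ℝ}

theorem sub_apply_zero_mem_Icc (hg : MonotoneOn g (Set.Icc 0 1)) {s : ℝ}
    (hs : s ∈ Set.Icc (0 : ℝ) 1) :
    g s - g 0 ∈ Set.Icc 0 (g 1 - g 0) :=
  ⟨sub_nonneg.2 (hg (Set.left_mem_Icc.2 zero_le_one) hs hs.1),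
    sub_le_sub_right (hg hs (Set.right_mem_Icc.2 zero_le_one) hs.2) _⟩

theorem Icc_subset_superlevelIcc (hg : MonotoneOn g (Set.Icc 0 1)) {t s : ℝ}
    (hs : s ∈ superlevelIcc g t) :
    Set.Icc s 1 ⊆ superlevelIcc g t := fun _ hs' =>
  ⟨hs.1.trans (sub_le_sub_right (hg hs.2 ⟨hs.2.1.trans hs'.1, hs'.2⟩ hs'.1) _),
    hs.2.1.trans hs'.1, hs'.2⟩

theorem mean_sub_eq_integral_card_superlevelIcc (hg : MonotoneOn g (Set.Icc 0 1))
    {x : Fin N → ℝ} (hN : 0 < N) (hx : ∀ n, x n ∈ Set.Icc (0 : ℝ) 1)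
    [∀ t, DecidablePred (· ∈ superlevelIcc g t)] :
    (1 / N : ℝ) * ∑ n, g (x n) - g 0 = ∫ t in Set.Ioc 0 (g 1 - g 0),
      ((Finset.univ.filter fun n => x n ∈ superlevelIcc g t).card : ℝ) / N := by
  have hcard (t : ℝ) : (Finset.univ.filter fun n => x n ∈ superlevelIcc g t).card
      = (Finset.univ.filter fun n => t ≤ g (x n) - g 0).card :=
    congrArg Finset.card (Finset.filter_congr fun n _ => and_iff_left (hx n))
  have hNR : (N : ℝ) ≠ 0 := by positivity
  calc (1 / N : ℝ) * ∑ n, g (x n) - g 0 = (∑ n, (g (x n) - g 0)) / N := by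
        rw [Finset.sum_sub_distrib, Finset.sum_const, Finset.card_univ, Fintype.card_fin,
          nsmul_eq_mul]
        field_simp
    _ = _ := by
        rw [sum_eq_integral_card_le (fun n => (hg.sub_apply_zero_mem_Icc (hx n)).1)
          (fun n => (hg.sub_apply_zero_mem_Icc (hx n)).2), ← integral_div]
        simp only [hcard]

theorem intervalIntegral_sub_eq_integral_volume_superlevelIcc
    (hg : MonotoneOn g (Set.Icc 0 1)) :
    (∫ t in (0 : ℝ)..1, g t) - g 0 =
      ∫ t in Set.Ioc 0 (g 1 - g 0), volume.real (superlevelIcc g t) := by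
  have hgi : IntegrableOn g (Set.Icc 0 1) := hg.integrableOn_isCompact isCompact_Icc
  have hc : IntegrableOn (fun _ => g 0) (Set.Icc (0 : ℝ) 1) :=
    integrableOn_const measure_Icc_lt_top.ne
  calc (∫ t in (0 : ℝ)..1, g t) - g 0 = ∫ s in Set.Icc 0 1, (g s - g 0) := by
        rw [intervalIntegral.integral_of_le zero_le_one, ← integral_Icc_eq_integral_Ioc,
          integral_sub hgi hc, setIntegral_const, Real.volume_real_Icc]
        simp
    _ = _ := setIntegral_eq_integral_measureReal_le_inter measurableSet_Icc (hgi.sub hc)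
        (fun _ hs => (hg.sub_apply_zero_mem_Icc hs).1)
        (fun _ hs => (hg.sub_apply_zero_mem_Icc hs).2)

theorem abs_samplingError_le (hg : MonotoneOn g (Set.Icc 0 1)) {x : Fin N → ℝ} {D : ℝ}
    (hD : IsDiscrepancyBound x D) (hN : 0 < N) (hx : ∀ n, x n ∈ Set.Icc (0 : ℝ) 1) :
    |samplingError x g| ≤ (g 1 - g 0) * D := by
  classical
  let a (t : ℝ) : ℝ := ((Finset.univ.filter fun n => x n ∈ superlevelIcc g t).card : ℝ) / N
  let b (t : ℝ) : ℝ := volume.real (superlevelIcc g t)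
  have ha : IntegrableOn a (Set.Ioc 0 (g 1 - g 0)) := by
    refine (AntitoneOn.integrableOn_isCompact isCompact_Icc ?_).mono_set Set.Ioc_subset_Icc_self
    intro t _ t' _ htt'
    dsimp only [a]
    gcongr
    exact antitone_superlevelIcc g htt'
  have hb : IntegrableOn b (Set.Ioc 0 (g 1 - g 0)) := by
    refine (AntitoneOn.integrableOn_isCompact isCompact_Icc ?_).mono_set Set.Ioc_subset_Icc_self
    intro t _ t' _ htt'
    exact measureReal_mono (antitone_superlevelIcc g htt')
      ((measure_mono Set.inter_subset_right).trans_lt measure_Icc_lt_top).ne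
  have hab (t : ℝ) : ‖a t - b t‖ ≤ D := by
    rw [Real.norm_eq_abs]
    convert hD.abs_card_div_sub_volume_le hN hx (fun _ hs => hs.2)
      fun _ => hg.Icc_subset_superlevelIcc (t := t)
  have hM : 0 ≤ g 1 - g 0 := (hg.sub_apply_zero_mem_Icc (Set.right_mem_Icc.2 zero_le_one)).1
  calc |samplingError x g| = ‖∫ t in Set.Ioc 0 (g 1 - g 0), (a t - b t)‖ := by
        rw [integral_sub ha hb, ← hg.mean_sub_eq_integral_card_superlevelIcc hN hx,
          ← hg.intervalIntegral_sub_eq_integral_volume_superlevelIcc, Real.norm_eq_abs,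
          samplingError]
        ring_nf
    _ ≤ D * volume.real (Set.Ioc 0 (g 1 - g 0)) :=
        norm_setIntegral_le_of_norm_le_const measure_Ioc_lt_top fun t _ => hab t
    _ = (g 1 - g 0) * D := by
        rw [Real.volume_real_Ioc, max_eq_left (by linarith), sub_zero, mul_comm]

end MonotoneOn

end Discrepancy

/-- Koksma's inequality: if `f` has total variation at most `V` on `[0,1]` and the points
`x₁, …, x_N ∈ [0,1]` have discrepancy at most `D` (over all subintervals of `[0,1]`),
then the sampling error of `f` is at most `V·D`. -/
theorem koksma_inequality (f : ℝ → ℝ) (V : ℝ) (hV0 : 0 ≤ V)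
    (hBV : eVariationOn f (Set.Icc 0 1) ≤ ENNReal.ofReal V)
    (N : ℕ) (hN : 0 < N) (x : Fin N → ℝ) (hx : ∀ n, x n ∈ Set.Icc (0 : ℝ) 1)
    (D : ℝ)
    (hD : ∀ a b : ℝ, 0 ≤ a → a ≤ b → b ≤ 1 →
      |((Finset.univ.filter fun n => x n ∈ Set.Icc a b).card : ℝ) / N - (b - a)| ≤ D) :
    |(1 / N : ℝ) * ∑ n, f (x n) - ∫ t in (0 : ℝ)..1, f t| ≤ V * D := by
  have hD' : IsDiscrepancyBound x D := hD
  have hbv : BoundedVariationOn f (Set.Icc 0 1) := (hBV.trans_lt ENNReal.ofReal_lt_top).ne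
  obtain ⟨p, q, hp, hq, rfl, hpq⟩ :=
    hbv.locallyBoundedVariationOn.exists_monotoneOn_sub_monotoneOn'
  have hvar : variationOnFromTo (p - q) (Set.Icc 0 1) 0 1 ≤ V := by
    rw [variationOnFromTo.eq_of_le _ _ zero_le_one, Set.inter_self]
    exact ENNReal.toReal_le_of_le_ofReal hV0 hBV
  have hint {g : ℝ → ℝ} (hg : MonotoneOn g (Set.Icc 0 1)) : IntervalIntegrable g volume 0 1 :=
    MonotoneOn.intervalIntegrable (by rwa [Set.uIcc_of_le zero_le_one])
  calc |samplingError x (p - q)| = |samplingError x p - samplingError x q| := by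
        rw [samplingError_sub x (hint hp) (hint hq)]
    _ ≤ |samplingError x p| + |samplingError x q| := abs_sub _ _
    _ ≤ (p 1 - p 0) * D + (q 1 - q 0) * D :=
        add_le_add (hp.abs_samplingError_le hD' hN hx) (hq.abs_samplingError_le hD' hN hx)
    _ = variationOnFromTo (p - q) (Set.Icc 0 1) 0 1 * D := by
        rw [← hpq 0 (Set.left_mem_Icc.2 zero_le_one) 1 (Set.right_mem_Icc.2 zero_le_one)]
        ring
    _ ≤ V * D := mul_le_mul_of_nonneg_right hvar hD'.nonneg
end

section
/- Suppose for a family of point configurations with N → ∞ the number-variance bound ∫_{S²}|Z(Cap(ξ,δ)) − N σ(Cap(ξ,δ))|² dσ(ξ) ≤ C·N·σ(Cap(ξ,δ)) holds for all δ with σ(Cap(ξ,δ)) ≥ N^{-1}. Then the covering radius M of the configuration satisfies M ≤ C'·N^{-1/4} for a constant C' depending only on C. -/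
/-!
If a point `x` of the sphere is at distance more than `ρ` from every point of the configuration,
then no cap of radius `ρ / 2` centred in `Cap(x, ρ / 2)` contains a point, so the number variance
at scale `δ = ρ / 2` is at least `(N δ² / 4)² σ(Cap(x, δ))`. The cone over a cap of radius `δ`
contains about `1 / δ` disjoint Euclidean balls of radius about `δ`, whence `σ(Cap(x, δ)) ≳ δ²`.
Comparing with the assumed bound `C N δ² / 4` gives `N ρ⁴ ≲ C`.
-/

open MeasureTheory Metric Finset

/-- The normalized (probability) surface measure on the unit sphere `S² ⊂ ℝ³`. -/
noncomputable def sphereProbMeasure :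
    Measure (sphere (0 : EuclideanSpace ℝ (Fin 3)) 1) :=
  ((volume : Measure (EuclideanSpace ℝ (Fin 3))).toSphere Set.univ)⁻¹ •
    (volume : Measure (EuclideanSpace ℝ (Fin 3))).toSphere

open scoped Pointwise ENNReal

section Cone

variable {E : Type*} [NormedAddCommGroup E] [NormedSpace ℝ E]

theorem ball_smul_subset_Ioo_smul_sphere_inter_closedBall {x : E} (hx : ‖x‖ = 1) {s r : ℝ}
    (hrs : r < s) (hsr : s + r ≤ 1) :
    ball (s • x) r ⊆ Set.Ioo (0 : ℝ) 1 • (sphere (0 : E) 1 ∩ closedBall x (2 * r / (s - r))) := by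
  intro y hy
  rw [mem_ball, dist_eq_norm] at hy
  have hr : 0 < r := (norm_nonneg _).trans_lt hy
  have hsx : ‖s • x‖ = s := by rw [norm_smul, hx, mul_one, Real.norm_of_nonneg (by linarith)]
  have hys : |‖y‖ - s| < r := hsx ▸ (abs_norm_sub_norm_le y (s • x)).trans_lt hy
  obtain ⟨hy_gt, hy_lt⟩ := abs_lt.1 hys
  have hy_pos : 0 < ‖y‖ := by linarith
  have hy_radial : ‖y - ‖y‖ • x‖ < 2 * r := calc
    ‖y - ‖y‖ • x‖ ≤ ‖y - s • x‖ + ‖(s - ‖y‖) • x‖ := by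
        rw [sub_smul]; exact norm_sub_le_norm_sub_add_norm_sub _ _ _
    _ = ‖y - s • x‖ + |‖y‖ - s| := by rw [norm_smul, hx, mul_one, Real.norm_eq_abs, abs_sub_comm]
    _ < 2 * r := by linarith
  have hu : ‖y‖⁻¹ • y ∈ sphere (0 : E) 1 ∩ closedBall x (2 * r / (s - r)) := by
    refine ⟨by simp [norm_smul, hy_pos.ne'], ?_⟩
    rw [mem_closedBall, dist_eq_norm,
      show ‖y‖⁻¹ • y - x = ‖y‖⁻¹ • (y - ‖y‖ • x) by
        rw [smul_sub, smul_smul, inv_mul_cancel₀ hy_pos.ne', one_smul],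
      norm_smul, norm_inv, norm_norm, inv_mul_eq_div]
    exact div_le_div₀ (by positivity) hy_radial.le (by linarith) (by linarith)
  have hy_mem : ‖y‖ ∈ Set.Ioo (0 : ℝ) 1 := ⟨hy_pos, by linarith⟩
  simpa [smul_smul, hy_pos.ne'] using Set.smul_mem_smul hy_mem hu

theorem dist_smul_smul_of_norm_eq_one {x : E} (hx : ‖x‖ = 1) (a b : ℝ) :
    dist (a • x) (b • x) = |a - b| := by
  rw [dist_eq_norm, ← sub_smul, norm_smul, hx, mul_one, Real.norm_eq_abs]

variable [FiniteDimensional ℝ E] [MeasurableSpace E] [BorelSpace E]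
  (μ : Measure E) [μ.IsAddHaarMeasure]

/-- The cone over the cap contains `⌈δ⁻¹⌉` disjoint balls of radius `δ / 8`, centred on the
segment from `x / 2` to `3x / 4`. -/
theorem ofReal_mul_measure_ball_le_measure_Ioo_smul_sphere_inter_closedBall {x : E}
    (hx : ‖x‖ = 1) {δ : ℝ} (hδ : 0 < δ) (hδ₂ : δ ≤ 2) :
    ENNReal.ofReal (δ⁻¹ * (δ / 8) ^ Module.finrank ℝ E) * μ (ball 0 1) ≤
      μ (Set.Ioo (0 : ℝ) 1 • (sphere (0 : E) 1 ∩ closedBall x δ)) := by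
  set c : ℕ → E := fun k => (1 / 2 + k * (δ / 4)) • x
  have hsub : ∀ k ∈ range ⌈δ⁻¹⌉₊,
      ball (c k) (δ / 8) ⊆ Set.Ioo (0 : ℝ) 1 • (sphere (0 : E) 1 ∩ closedBall x δ) := by
    intro k hk
    have hkδ : (k : ℝ) * δ < 1 := by
      simpa [hδ.ne'] using mul_lt_mul_of_pos_right (Nat.lt_ceil.1 (mem_range.1 hk)) hδ
    refine (ball_smul_subset_Ioo_smul_sphere_inter_closedBall hx (by nlinarith)
      (by nlinarith)).trans ?_
    gcongr
    rw [div_le_iff₀ (by nlinarith)]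
    nlinarith [mul_nonneg (Nat.cast_nonneg k : (0 : ℝ) ≤ k) (sq_nonneg δ)]
  have hdisj : Pairwise (Function.onFun Disjoint fun k => ball (c k) (δ / 8)) := by
    refine (pairwise_disjoint_on _).2 fun k l hkl => ball_disjoint_ball ?_
    have hkl' : (k : ℝ) + 1 ≤ l := by exact_mod_cast hkl
    rw [dist_smul_smul_of_norm_eq_one hx, abs_sub_comm, abs_of_nonneg (by nlinarith)]
    nlinarith
  calc ENNReal.ofReal (δ⁻¹ * (δ / 8) ^ Module.finrank ℝ E) * μ (ball 0 1)
      ≤ ⌈δ⁻¹⌉₊ * (ENNReal.ofReal ((δ / 8) ^ Module.finrank ℝ E) * μ (ball 0 1)) := by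
        rw [ENNReal.ofReal_mul (by positivity), mul_assoc, ← ENNReal.ofReal_natCast]
        gcongr
        exact Nat.le_ceil _
    _ = ∑ k ∈ range ⌈δ⁻¹⌉₊, μ (ball (c k) (δ / 8)) := by
        simp [μ.addHaar_ball_of_pos _ (by positivity : 0 < δ / 8)]
    _ = μ (⋃ k ∈ range ⌈δ⁻¹⌉₊, ball (c k) (δ / 8)) :=
        (measure_biUnion_finset (hdisj.set_pairwise _) fun _ _ => measurableSet_ball).symm
    _ ≤ _ := measure_mono (Set.iUnion₂_subset hsub)

theorem ofReal_le_inv_smul_toSphere_closedBall [Nontrivial E] (x : sphere (0 : E) 1) {δ : ℝ}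
    (hδ : 0 < δ) (hδ₂ : δ ≤ 2) :
    ENNReal.ofReal (δ⁻¹ * (δ / 8) ^ Module.finrank ℝ E) ≤
      ((μ.toSphere Set.univ)⁻¹ • μ.toSphere) (closedBall x δ) := by
  have hx : ‖(x : E)‖ = 1 := norm_eq_of_mem_sphere x
  have hd : (Module.finrank ℝ E : ℝ≥0∞) ≠ 0 := by simp [Module.finrank_pos.ne']
  rw [Measure.smul_apply, smul_eq_mul, μ.toSphere_apply' measurableSet_closedBall,
    Subtype.image_closedBall, Set.ofPred_mem_eq, Set.inter_comm, μ.toSphere_apply_univ,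
    ← ENNReal.mul_le_iff_le_inv (mul_ne_zero hd (measure_ball_pos μ 0 one_pos).ne')
      (ENNReal.mul_ne_top (ENNReal.natCast_ne_top _) measure_ball_lt_top.ne),
    mul_right_comm, mul_assoc]
  gcongr
  exact ofReal_mul_measure_ball_le_measure_Ioo_smul_sphere_inter_closedBall μ hx hδ hδ₂

end Cone

instance : IsProbabilityMeasure sphereProbMeasure :=
  have : NeZero (volume : Measure (EuclideanSpace ℝ (Fin 3))).toSphere :=
    ⟨Measure.toSphere_ne_zero _⟩
  isProbabilityMeasureSMul

theorem sq_div_le_sphereProbMeasure_real_closedBall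
    (x : sphere (0 : EuclideanSpace ℝ (Fin 3)) 1) {δ : ℝ} (hδ : 0 < δ) (hδ₂ : δ ≤ 2) :
    δ ^ 2 / 512 ≤ sphereProbMeasure.real (closedBall x δ) := by
  have h := ofReal_le_inv_smul_toSphere_closedBall volume x hδ hδ₂
  rw [finrank_euclideanSpace_fin,
    show δ⁻¹ * (δ / 8) ^ 3 = δ ^ 2 / 512 by field_simp; ring] at h
  exact (ENNReal.ofReal_le_iff_le_toReal (measure_ne_top _ _)).1 h

section CapCount

variable {X ι : Type*} [PseudoMetricSpace X] [Fintype ι]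

/-- The number `Z(Cap(ξ, δ))` of points of the configuration `P` in the closed ball of radius `δ`
about `ξ`. -/
noncomputable def capCount (P : ι → X) (δ : ℝ) (ξ : X) : ℕ :=
  #{j | dist (P j) ξ ≤ δ}

variable {P : ι → X} {δ : ℝ}

theorem capCount_le_card (ξ : X) : capCount P δ ξ ≤ Fintype.card ι :=
  (card_filter_le _ _).trans_eq card_univ

theorem capCount_eq_zero {x ξ : X} (hP : ∀ j, 2 * δ < dist x (P j)) (hξ : ξ ∈ closedBall x δ) :
    capCount P δ ξ = 0 := by
  refine card_eq_zero.2 (filter_eq_empty_iff.2 fun j _ hj => (hP j).not_ge ?_)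
  linarith [dist_triangle x ξ (P j), dist_comm (P j) ξ, mem_closedBall'.1 hξ]

variable [MeasurableSpace X] [OpensMeasurableSpace X]

theorem measurable_capCount : Measurable (capCount P δ) := by
  unfold capCount
  simp_rw [card_filter]
  exact Finset.measurable_sum _ fun j _ =>
    Measurable.ite (isClosed_le (by fun_prop) continuous_const).measurableSet
      measurable_const measurable_const

theorem integrable_sq_capCount_sub (μ : Measure X) [IsFiniteMeasure μ] (a : ℝ) :
    Integrable (fun ξ => ((capCount P δ ξ : ℝ) - a) ^ 2) μ := by
  have hZ_meas : Measurable fun ξ => (capCount P δ ξ : ℝ) :=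
    measurable_from_nat.comp measurable_capCount
  refine .of_bound ((hZ_meas.sub_const a).pow_const 2).aestronglyMeasurable
    ((Fintype.card ι + |a|) ^ 2) (ae_of_all _ fun ξ => ?_)
  have hZ : (capCount P δ ξ : ℝ) ≤ Fintype.card ι := by exact_mod_cast capCount_le_card ξ
  rw [Real.norm_of_nonneg (sq_nonneg _), ← sq_abs]
  gcongr
  exact (abs_sub _ _).trans (by rw [Nat.abs_cast]; linarith)

/-- `capCount P δ` vanishes on `closedBall x δ`, where the integrand is therefore `a²`. -/
theorem sq_mul_measureReal_le_integral_sq_capCount_sub (μ : Measure X) [IsFiniteMeasure μ]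
    {x : X} (hP : ∀ j, 2 * δ < dist x (P j)) (a : ℝ) :
    a ^ 2 * μ.real (closedBall x δ) ≤ ∫ ξ, ((capCount P δ ξ : ℝ) - a) ^ 2 ∂μ :=
  calc a ^ 2 * μ.real (closedBall x δ)
      ≤ ∫ ξ in closedBall x δ, ((capCount P δ ξ : ℝ) - a) ^ 2 ∂μ :=
        setIntegral_ge_of_const_le_real measurableSet_closedBall (measure_ne_top _ _)
          (fun ξ hξ => by simp [capCount_eq_zero hP hξ])
          (integrable_sq_capCount_sub μ a).integrableOn
    _ ≤ ∫ ξ, ((capCount P δ ξ : ℝ) - a) ^ 2 ∂μ :=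
        setIntegral_le_integral (integrable_sq_capCount_sub μ a) (ae_of_all _ fun _ => sq_nonneg _)

end CapCount

/-- A number-variance upper bound `∫ |Z(Cap(ξ,δ)) - Nσ(Cap)|² dσ ≤ C·N·σ(Cap)` for all
caps with `σ(Cap(ξ,δ)) = δ²/4 ≥ N⁻¹` forces the covering radius to be `≤ C'·N^{-1/4}`,
with `C'` depending only on `C`. -/
theorem variance_bound_implies_covering (C : ℝ) (hC : 0 < C) :
    ∃ C' : ℝ, 0 < C' ∧ ∀ (N : ℕ), 0 < N →
      ∀ P : Fin N → sphere (0 : EuclideanSpace ℝ (Fin 3)) 1,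
      (∀ δ : ℝ, 0 < δ → δ ≤ 2 → ((N : ℝ))⁻¹ ≤ δ ^ 2 / 4 →
        (∫ ξ, (((Finset.univ.filter fun j =>
              dist (P j : EuclideanSpace ℝ (Fin 3)) (ξ : EuclideanSpace ℝ (Fin 3)) ≤ δ).card : ℝ)
            - (N : ℝ) * (δ ^ 2 / 4)) ^ 2 ∂sphereProbMeasure) ≤ C * N * (δ ^ 2 / 4)) →
      ∀ x : sphere (0 : EuclideanSpace ℝ (Fin 3)) 1,
        ∃ j, dist (x : EuclideanSpace ℝ (Fin 3)) (P j : EuclideanSpace ℝ (Fin 3)) ≤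
          C' * (N : ℝ) ^ (-(1 : ℝ) / 4) := by
  -- `C' ≥ 4` makes the cap of radius `ρ / 2` admissible, and `C'⁴ ≥ C' > 2¹⁵ C` is what fails.
  set C' : ℝ := 4 + 2 ^ 15 * C
  have hC' : 4 ≤ C' := by linarith [hC]
  refine ⟨C', by positivity, fun N hN P hvar x => ?_⟩
  set ρ := C' * (N : ℝ) ^ (-(1 : ℝ) / 4)
  by_contra! hfar
  have hN : (0 : ℝ) < N := by exact_mod_cast hN
  have hρ : 0 < ρ := by positivity
  have hNρ : (N : ℝ) * ρ ^ 4 = C' ^ 4 := by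
    rw [mul_pow, ← Real.rpow_natCast ((N : ℝ) ^ _), ← Real.rpow_mul hN.le]
    norm_num [Real.rpow_neg_one]
    field_simp
  have hρ₂ : ρ < 2 := by
    have := norm_sub_le (x : EuclideanSpace ℝ (Fin 3)) (P ⟨0, ‹_›⟩)
    rw [norm_eq_of_mem_sphere, norm_eq_of_mem_sphere] at this
    linarith [hfar ⟨0, ‹_›⟩, dist_eq_norm (x : EuclideanSpace ℝ (Fin 3)) (P ⟨0, ‹_›⟩)]
  have hadm : (N : ℝ)⁻¹ ≤ (ρ / 2) ^ 2 / 4 := by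
    have : 4 ^ 4 ≤ (N : ℝ) * ρ ^ 2 * ρ ^ 2 := by rw [mul_assoc, ← pow_add, hNρ]; gcongr
    rw [inv_le_iff_one_le_mul₀ hN]
    nlinarith
  have hσ := sq_div_le_sphereProbMeasure_real_closedBall x (by positivity : 0 < ρ / 2) (by linarith)
  have hvar_ρ : ∫ ξ, ((capCount P (ρ / 2) ξ : ℝ) - N * ((ρ / 2) ^ 2 / 4)) ^ 2 ∂sphereProbMeasure
      ≤ C * N * ((ρ / 2) ^ 2 / 4) :=
    hvar (ρ / 2) (by positivity) (by linarith) hadm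
  have hempty := sq_mul_measureReal_le_integral_sq_capCount_sub sphereProbMeasure
    (fun j => by rw [mul_div_cancel₀ _ two_ne_zero]; exact hfar j) ((N : ℝ) * ((ρ / 2) ^ 2 / 4))
  have hNρ_le : (N : ℝ) * ρ ^ 4 ≤ 2 ^ 15 * C := by
    nlinarith [mul_pos hN (pow_pos hρ 2), sq_nonneg ((N : ℝ) * ρ ^ 2)]
  nlinarith [le_self_pow₀ (by linarith : (1 : ℝ) ≤ C') (by norm_num : 4 ≠ 0)]
end
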